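/- (Definability of the ideal ordering between intervened states, formula (2).) Fix a signature S and let Φ be the set of all atoms X=x for X ∈ U∪V. For every causal deontic model M_D=(S,F,P,A) whose priority ordering P has domain Φ, all exogenous settings u, u', and all intervention tuples Y⃗=y⃗ and Z⃗=z⃗ of distinct endogenous variables, the following are equivalent: (a) M_D satisfies the formula ⋀_{X=x∈Φ}(([Y⃗=y⃗]X=x)^u → ([Z⃗=z⃗]X=x)^{u'}) ∨ ⋁_{W=w∈Φ}( (([Z⃗=z⃗]W=w)^{u'} ∧ ¬([Y⃗=y⃗]W=w)^u) ∧ ⋀_{E=e∈Φ}((([Y⃗=y⃗]E=e)^u ∧ ¬([Z⃗=z⃗]E=e)^{u'}) → E=e ≺ W=w) ); (b) A₁ ≤_P A₂, where A₁ is the unique assignment complying with F_{Y⃗=y⃗} with exogenous values u, A₂ is the unique assignment complying with F_{Z⃗=z⃗} with exogenous values u', and ≤_P is the ideal-ordering condition induced by P applied to A₁ and A₂. -/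

import Mathlib

/-- A signature `(U, V, R)`: finite set of exogenous variables `U`, finite set of
endogenous variables `V` (disjoint from `U`, modelled by a sum type), and for each
variable a finite nonempty range of values. -/
structure Signature where
  U : Type
  V : Type
  R : U ⊕ V → Type
  fintypeU : Fintype U
  fintypeV : Fintype V
  decEqU : DecidableEq U
  decEqV : DecidableEq V
  fintypeR : ∀ X, Fintype (R X)
  nonemptyR : ∀ X, Nonempty (R X)
  decEqR : ∀ X, DecidableEq (R X)

attribute [instance] Signature.fintypeU Signature.fintypeV Signature.decEqU
  Signature.decEqV Signature.fintypeR Signature.nonemptyR Signature.decEqR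

/-- An assignment of values to all the variables. -/
abbrev Assignment (S : Signature) : Type := ∀ X : S.U ⊕ S.V, S.R X

/-- An exogenous setting: an assignment of values to all exogenous variables. -/
abbrev ExoSetting (S : Signature) : Type := ∀ X : S.U, S.R (Sum.inl X)

/-- An assignment of values to all variables except `X` (i.e. `A^{-X}`). -/
abbrev CoAssignment (S : Signature) (X : S.U ⊕ S.V) : Type :=
  ∀ Y : S.U ⊕ S.V, Y ≠ X → S.R Y

/-- The restriction `A^{-X}` of an assignment. -/
def Assignment.minus {S : Signature} (A : Assignment S) (X : S.U ⊕ S.V) :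
    CoAssignment S X := fun Y _ => A Y

/-- A set of structural functions: for each endogenous variable `X`, a function
giving the value of `X` from the values of all the other variables. -/
abbrev StructFns (S : Signature) : Type :=
  ∀ X : S.V, CoAssignment S (Sum.inr X) → S.R (Sum.inr X)

/-- `A` complies with `F` iff `A(X) = f_X(A^{-X})` for every endogenous `X`. -/
def Complies (S : Signature) (F : StructFns S) (A : Assignment S) : Prop :=
  ∀ X : S.V, A (Sum.inr X) = F X (A.minus (Sum.inr X))

/-- `F` is recursive (acyclic): there is a strict total order on the variables such
that each `f_X` does not depend on the values of variables strictly above `X`. -/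
def Recursive (S : Signature) (F : StructFns S) : Prop :=
  ∃ lt : (S.U ⊕ S.V) → (S.U ⊕ S.V) → Prop,
    IsStrictTotalOrder (S.U ⊕ S.V) lt ∧
    ∀ X : S.V, ∀ B B' : CoAssignment S (Sum.inr X),
      (∀ Y (hne : Y ≠ Sum.inr X), lt Y (Sum.inr X) → B Y hne = B' Y hne) →
      F X B = F X B'

/-- An intervention tuple `X⃗ = x⃗`: a list of endogenous variables with values. -/
abbrev Ivn (S : Signature) : Type := List ((X : S.V) × S.R (Sum.inr X))

/-- The variables of an intervention tuple. -/
def Ivn.fsts {S : Signature} (l : Ivn S) : List S.V := l.map Sigma.fst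

/-- The variables in the tuple are pairwise distinct. -/
def Ivn.Distinct {S : Signature} (l : Ivn S) : Prop := (l.map Sigma.fst).Nodup

/-- The intervened structural functions `F_{X⃗ = x⃗}`: each `f_{X_i}` is replaced by
the constant function returning `x_i`; the other functions are unchanged. -/
noncomputable def applyIvn (S : Signature) (F : StructFns S) (l : Ivn S) : StructFns S :=
  fun X B =>
    if h : ∃ x : S.R (Sum.inr X), (⟨X, x⟩ : (Y : S.V) × S.R (Sum.inr Y)) ∈ l then h.choose
    else F X B

/-- Formulas of the language `L_D`:
atoms `X = x`, negation, conjunction, intervention formulas `[X⃗=x⃗]φ`,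
priority formulas `X=x ≺ Y=y`, and context formulas `φ^u`. -/
inductive Formula (S : Signature) : Type where
  | atom (X : S.U ⊕ S.V) (x : S.R X) : Formula S
  | neg (φ : Formula S) : Formula S
  | and (φ ψ : Formula S) : Formula S
  | intervene (l : Ivn S) (φ : Formula S) : Formula S
  | prec (X : S.U ⊕ S.V) (x : S.R X) (Y : S.U ⊕ S.V) (y : S.R Y) : Formula S
  | ctx (u : ExoSetting S) (φ : Formula S) : Formula S

def Formula.imp {S : Signature} (φ ψ : Formula S) : Formula S := .neg (.and φ (.neg ψ))

def Formula.or {S : Signature} (φ ψ : Formula S) : Formula S := .neg (.and (.neg φ) (.neg ψ))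

def Formula.iffF {S : Signature} (φ ψ : Formula S) : Formula S := .and (φ.imp ψ) (ψ.imp φ)

/-- Atoms `X = x`. -/
abbrev SAtom (S : Signature) : Type := (X : S.U ⊕ S.V) × S.R X

/-- A priority structure `P = (Φ, ≪)`: a set of atoms together with a
priority relation among atoms. -/
structure Priority (S : Signature) where
  dom : Set (SAtom S)
  lt : SAtom S → SAtom S → Prop

/-- The priority relation is a strict partial order (asymmetric and transitive). -/
def Priority.Strict {S : Signature} (P : Priority S) : Prop :=
  (∀ a b, P.lt a b → ¬ P.lt b a) ∧ (∀ a b c, P.lt a b → P.lt b c → P.lt a c)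

open Classical in
/-- The unique assignment complying with `F` whose values on the exogenous
variables are given by `u` (when `F` is recursive it exists and is unique). -/
noncomputable def solve (S : Signature) (F : StructFns S) (u : ExoSetting S) : Assignment S :=
  if h : ∃ A : Assignment S, Complies S F A ∧ ∀ X : S.U, A (Sum.inl X) = u X then h.choose
  else fun X => Classical.arbitrary (S.R X)

/-- Truth of a formula at structural functions `F`, priority `P` and actual
assignment `A`. -/
def Sat (S : Signature) : StructFns S → Priority S → Assignment S → Formula S → Prop
  | _, _, A, .atom X x => A X = x
  | F, P, A, .neg φ => ¬ Sat S F P A φ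
  | F, P, A, .and φ ψ => Sat S F P A φ ∧ Sat S F P A ψ
  | F, P, A, .intervene l φ =>
      Sat S (applyIvn S F l) P (solve S (applyIvn S F l) (fun X => A (Sum.inl X))) φ
  | _, P, _, .prec X x Y y => P.lt ⟨X, x⟩ ⟨Y, y⟩
  | F, P, _, .ctx u φ => Sat S F P (solve S F u) φ

/-- A causal deontic model: recursive structural functions, a priority
structure which is a strict partial order, and an actual assignment complying
with the structural functions. -/
structure CDModel (S : Signature) where
  F : StructFns S
  P : Priority S
  A : Assignment S
  recF : Recursive S F
  strictP : P.Strict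
  compliesA : Complies S F A

/-- Truth in a causal deontic model. -/
def CDModel.Sat {S : Signature} (M : CDModel S) (φ : Formula S) : Prop :=
  _root_.Sat S M.F M.P M.A φ

/-- A falsum, available whenever the signature has at least one variable. -/
noncomputable def botF (S : Signature) (h : Nonempty (S.U ⊕ S.V)) : Formula S :=
  Formula.and (.atom (@Classical.arbitrary _ h) (Classical.arbitrary _))
    (.neg (.atom (@Classical.arbitrary _ h) (Classical.arbitrary _)))

/-- A verum. -/
noncomputable def topF (S : Signature) (h : Nonempty (S.U ⊕ S.V)) : Formula S :=
  .neg (botF S h)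

/-- Finite conjunction. -/
noncomputable def bigAnd (S : Signature) (h : Nonempty (S.U ⊕ S.V))
    (L : List (Formula S)) : Formula S :=
  L.foldr Formula.and (topF S h)

/-- Finite disjunction. -/
noncomputable def bigOr (S : Signature) (h : Nonempty (S.U ⊕ S.V))
    (L : List (Formula S)) : Formula S :=
  L.foldr Formula.or (botF S h)

/-- The ideal ordering `≤_P` induced by a priority structure with domain `dom` and
priority relation `lt`: `A ≤_P A'` iff either every atom of the domain satisfied by
`A` is satisfied by `A'`, or there is an atom `Y=y` in the domain with `A(Y) ≠ y`,
`A'(Y) = y` such that every atom `Z=z` of the domain with `A(Z) = z` and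
`A'(Z) ≠ z` has strictly lower priority than `Y=y`. -/
def IdealLe (S : Signature) (dom : Set (SAtom S)) (lt : SAtom S → SAtom S → Prop)
    (A A' : Assignment S) : Prop :=
  (∀ a ∈ dom, A a.1 = a.2 → A' a.1 = a.2) ∨
  ∃ b ∈ dom, A b.1 ≠ b.2 ∧ A' b.1 = b.2 ∧
    ∀ c ∈ dom, A c.1 = c.2 → A' c.1 ≠ c.2 → lt c b

/-- The list of all atoms of the signature. -/
noncomputable def allAtoms (S : Signature) : List (SAtom S) :=
  (Finset.univ : Finset (SAtom S)).toList

/-- Formula (2), defining `[Y⃗=y⃗]U⃗=u ≤ [Z⃗=z⃗]U⃗=u'`. -/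
noncomputable def formula2 (S : Signature) (h : Nonempty (S.U ⊕ S.V))
    (u u' : ExoSetting S) (ly lz : Ivn S) : Formula S :=
  Formula.or
    (bigAnd S h ((allAtoms S).map fun a =>
      (Formula.ctx u (.intervene ly (.atom a.1 a.2))).imp
        (Formula.ctx u' (.intervene lz (.atom a.1 a.2)))))
    (bigOr S h ((allAtoms S).map fun w =>
      Formula.and
        (Formula.and (Formula.ctx u' (.intervene lz (.atom w.1 w.2)))
          (.neg (Formula.ctx u (.intervene ly (.atom w.1 w.2)))))
        (bigAnd S h ((allAtoms S).map fun e =>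
          (Formula.and (Formula.ctx u (.intervene ly (.atom e.1 e.2)))
            (.neg (Formula.ctx u' (.intervene lz (.atom e.1 e.2))))).imp
              (Formula.prec e.1 e.2 w.1 w.2)))))

/-!
A recursive system of structural functions has exactly one compliant assignment for each
exogenous setting (build it, and compare two of them, by well-founded recursion along the
order witnessing recursiveness), and intervening keeps the system recursive. Hence
`([Y⃗=y⃗]X=x)^u` holds exactly when `A₁ X = x`, and `([Z⃗=z⃗]X=x)^{u'}` exactly when
`A₂ X = x`. After this substitution the two disjuncts of formula (2) are the two clauses of
`A₁ ≤_P A₂`, because its finite conjunctions and disjunctions range over all atoms, which is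
the domain of `P`.
-/

section Solutions

variable {S : Signature} {F : StructFns S} {A : Assignment S}

theorem Recursive.eq_of_complies (hF : Recursive S F) {A' : Assignment S}
    (hA : Complies S F A) (hA' : Complies S F A')
    (hexo : ∀ X, A (Sum.inl X) = A' (Sum.inl X)) : A = A' := by
  obtain ⟨lt, hlt, hdep⟩ := hF
  have := hlt
  have wf : WellFounded lt := Finite.wellFounded_of_trans_of_irrefl lt
  funext Y
  induction Y using wf.induction with
  | _ Y ih =>
    cases Y with
    | inl X => exact hexo X
    | inr X =>
      rw [hA X, hA' X]
      exact hdep X _ _ fun Z _ hZ => ih Z hZ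

theorem Recursive.exists_complies (hF : Recursive S F) (u : ExoSetting S) :
    ∃ A : Assignment S, Complies S F A ∧ ∀ X, A (Sum.inl X) = u X := by
  classical
  obtain ⟨lt, hlt, hdep⟩ := hF
  have := hlt
  have wf : WellFounded lt := Finite.wellFounded_of_trans_of_irrefl lt
  -- `f_X` ignores the variables not below `X`, so these may be filled in arbitrarily.
  let step : ∀ Y, (∀ Z, lt Z Y → S.R Z) → S.R Y
    | .inl X, _ => u X
    | .inr X, below => F X fun Z _ =>
        if hZ : lt Z (.inr X) then below Z hZ else Classical.arbitrary _
  have hfix : ∀ Y, wf.fix step Y = step Y fun Z _ => wf.fix step Z := wf.fix_eq step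
  refine ⟨wf.fix step, fun X => ?_, fun X => hfix (.inl X)⟩
  rw [hfix (.inr X)]
  exact hdep X _ _ fun Z _ hZ => by simp [Assignment.minus, hZ]

theorem Recursive.solve_eq (hF : Recursive S F) {u : ExoSetting S}
    (hA : Complies S F A) (hu : ∀ X, A (Sum.inl X) = u X) : solve S F u = A := by
  have hex : ∃ A', Complies S F A' ∧ ∀ X, A' (Sum.inl X) = u X := ⟨A, hA, hu⟩
  rw [solve, dif_pos hex]
  exact hF.eq_of_complies hex.choose_spec.1 hA fun X => (hex.choose_spec.2 X).trans (hu X).symm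

theorem recursive_applyIvn (hF : Recursive S F) (l : Ivn S) : Recursive S (applyIvn S F l) := by
  obtain ⟨lt, hlt, hdep⟩ := hF
  refine ⟨lt, hlt, fun X B B' hBB' => ?_⟩
  by_cases hX : ∃ x, (⟨X, x⟩ : (Y : S.V) × S.R (Sum.inr Y)) ∈ l
  · simp only [applyIvn, dif_pos hX]
  · simpa only [applyIvn, dif_neg hX] using hdep X B B' hBB'

noncomputable def intervenedState (S : Signature) (F : StructFns S) (u : ExoSetting S)
    (l : Ivn S) : Assignment S :=
  solve S (applyIvn S F l) fun X => solve S F u (Sum.inl X)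

theorem Recursive.intervenedState_eq (hF : Recursive S F) {u : ExoSetting S} {l : Ivn S}
    (hA : Complies S (applyIvn S F l) A) (hu : ∀ X, A (Sum.inl X) = u X) :
    intervenedState S F u l = A := by
  obtain ⟨A₀, hA₀, hu₀⟩ := hF.exists_complies u
  have hexo : (fun X => solve S F u (Sum.inl X)) = u := by
    rw [hF.solve_eq hA₀ hu₀]
    exact funext hu₀
  rw [intervenedState, hexo, (recursive_applyIvn hF l).solve_eq hA hu]

end Solutions

section Satisfaction

variable {S : Signature} {F : StructFns S} {P : Priority S} {A : Assignment S}

@[simp]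
theorem sat_neg {φ : Formula S} : Sat S F P A (.neg φ) ↔ ¬ Sat S F P A φ := Iff.rfl

@[simp]
theorem sat_and {φ ψ : Formula S} :
    Sat S F P A (.and φ ψ) ↔ Sat S F P A φ ∧ Sat S F P A ψ := Iff.rfl

@[simp]
theorem sat_prec {X Y : S.U ⊕ S.V} {x : S.R X} {y : S.R Y} :
    Sat S F P A (.prec X x Y y) ↔ P.lt ⟨X, x⟩ ⟨Y, y⟩ := Iff.rfl

@[simp]
theorem sat_ctx_intervene_atom {u : ExoSetting S} {l : Ivn S} {X : S.U ⊕ S.V} {x : S.R X} :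
    Sat S F P A (.ctx u (.intervene l (.atom X x))) ↔ intervenedState S F u l X = x :=
  Iff.rfl

@[simp]
theorem sat_imp {φ ψ : Formula S} :
    Sat S F P A (φ.imp ψ) ↔ (Sat S F P A φ → Sat S F P A ψ) := by
  simp [Formula.imp]

@[simp]
theorem sat_or {φ ψ : Formula S} :
    Sat S F P A (φ.or ψ) ↔ Sat S F P A φ ∨ Sat S F P A ψ := by
  simp [Formula.or, or_iff_not_and_not]

theorem not_sat_botF (h : Nonempty (S.U ⊕ S.V)) : ¬ Sat S F P A (botF S h) := by
  simp [botF, Sat]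

@[simp]
theorem sat_bigAnd (h : Nonempty (S.U ⊕ S.V)) (L : List (Formula S)) :
    Sat S F P A (bigAnd S h L) ↔ ∀ φ ∈ L, Sat S F P A φ := by
  induction L with
  | nil => simpa [bigAnd, topF] using not_sat_botF h
  | cons φ L ih => simp [bigAnd, ← ih]

@[simp]
theorem sat_bigOr (h : Nonempty (S.U ⊕ S.V)) (L : List (Formula S)) :
    Sat S F P A (bigOr S h L) ↔ ∃ φ ∈ L, Sat S F P A φ := by
  induction L with
  | nil => simpa [bigOr] using not_sat_botF h
  | cons φ L ih => simp [bigOr, ← ih]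

@[simp]
theorem mem_allAtoms (a : SAtom S) : a ∈ allAtoms S := by
  simp [allAtoms]

theorem sat_formula2_iff_idealLe (h : Nonempty (S.U ⊕ S.V)) (u u' : ExoSetting S)
    (ly lz : Ivn S) :
    Sat S F P A (formula2 S h u u' ly lz) ↔
      IdealLe S Set.univ P.lt (intervenedState S F u ly) (intervenedState S F u' lz) := by
  simp only [formula2, IdealLe, sat_or, sat_bigAnd, sat_bigOr, List.mem_map, mem_allAtoms,
    true_and, forall_exists_index, forall_apply_eq_imp_iff, exists_exists_eq_and, sat_imp, sat_and,
    sat_neg, sat_prec, sat_ctx_intervene_atom, Set.mem_univ, forall_const, and_imp, Sigma.eta,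
    ne_eq, and_assoc, and_left_comm]

end Satisfaction

theorem formula2_defines_intervened_ordering_general (S : Signature)
    (h : Nonempty (S.U ⊕ S.V)) (M : CDModel S) (hdom : M.P.dom = Set.univ)
    (u u' : ExoSetting S) (ly lz : Ivn S)
    (A₁ A₂ : Assignment S)
    (hA₁ : Complies S (applyIvn S M.F ly) A₁) (hu₁ : ∀ X : S.U, A₁ (Sum.inl X) = u X)
    (hA₂ : Complies S (applyIvn S M.F lz) A₂) (hu₂ : ∀ X : S.U, A₂ (Sum.inl X) = u' X) :
    M.Sat (formula2 S h u u' ly lz) ↔ IdealLe S M.P.dom M.P.lt A₁ A₂ := by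
  rw [hdom, ← M.recF.intervenedState_eq hA₁ hu₁, ← M.recF.intervenedState_eq hA₂ hu₂]
  exact sat_formula2_iff_idealLe h u u' ly lz

/-- definability of the ideal ordering between intervened states,
formula (2): for every causal deontic model whose priority ordering has as domain
the set of all atoms, all exogenous settings `u, u'`, and all intervention tuples
`Y⃗=y⃗` and `Z⃗=z⃗` of distinct endogenous variables, the model satisfies formula
(2) iff `A₁ ≤_P A₂`, where `A₁` is the unique assignment complying with
`F_{Y⃗=y⃗}` with exogenous values `u`, and `A₂` the unique assignment complying
with `F_{Z⃗=z⃗}` with exogenous values `u'`. -/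
theorem formula2_defines_intervened_ordering (S : Signature)
    (h : Nonempty (S.U ⊕ S.V)) (M : CDModel S) (hdom : M.P.dom = Set.univ)
    (u u' : ExoSetting S) (ly lz : Ivn S)
    (hly : Ivn.Distinct ly) (hlz : Ivn.Distinct lz)
    (A₁ A₂ : Assignment S)
    (hA₁ : Complies S (applyIvn S M.F ly) A₁) (hu₁ : ∀ X : S.U, A₁ (Sum.inl X) = u X)
    (hA₂ : Complies S (applyIvn S M.F lz) A₂) (hu₂ : ∀ X : S.U, A₂ (Sum.inl X) = u' X) :
    M.Sat (formula2 S h u u' ly lz) ↔ IdealLe S M.P.dom M.P.lt A₁ A₂ :=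
  formula2_defines_intervened_ordering_general S h M hdom u u' ly lz A₁ A₂ hA₁ hu₁ hA₂ hu₂
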